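/- Let G be a finite bipartite graph with bipartition (B, W), |B| = |W|, let b₀ ∈ B, w₀ ∈ W, b ∈ B, w ∈ W, and suppose e = bw is an edge of G. If M₁ is a perfect matching of G \ {b₀, w} and M₂ is a perfect matching of G \ {b, w₀}, then there exist a perfect matching M of G and a perfect matching M' of G \ {b₀, w₀} such that, as multisets of edges, M₁ ∪ M₂ ∪ {e} = M ∪ M'. -/
import Mathlib


/-- `M` is a perfect matching of the induced subgraph of `G` on the vertex set `S`:
its elements are edges of `G`, every vertex of `S` is covered exactly once, and no
vertex outside `S` is covered. -/
def IsPMOn {V : Type*} (G : SimpleGraph V) (S : Set V) (M : Finset (Sym2 V)) : Prop :=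
  (∀ e ∈ M, e ∈ G.edgeSet) ∧ (∀ v ∈ S, ∃! e, e ∈ M ∧ v ∈ e) ∧ (∀ e ∈ M, ∀ v ∈ e, v ∈ S)

lemma pm_congr {V : Type*} {G : SimpleGraph V} {S S' : Set V} {M : Finset (Sym2 V)}
    (h : IsPMOn G S M) (hS : S = S') : IsPMOn G S' M := hS ▸ h

lemma pm_insert {V : Type*} [DecidableEq V] {G : SimpleGraph V} {S : Set V}
    {M : Finset (Sym2 V)} {x y : V} (h : IsPMOn G S M) (hxy : G.Adj x y)
    (hx : x ∉ S) (hy : y ∉ S) :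
    IsPMOn G (S ∪ {x, y}) (insert s(x, y) M) := by
  obtain ⟨h1, h2, h3⟩ := h
  refine ⟨?_, ?_, ?_⟩
  · intro e he
    rcases Finset.mem_insert.1 he with rfl | he
    · exact hxy
    · exact h1 e he
  · intro v hv
    rcases hv with hv | hv
    · obtain ⟨e, ⟨heM, hve⟩, hu⟩ := h2 v hv
      refine ⟨e, ⟨Finset.mem_insert_of_mem heM, hve⟩, ?_⟩
      rintro e' ⟨he', hve'⟩
      rcases Finset.mem_insert.1 he' with rfl | he'
      · rcases Sym2.mem_iff.1 hve' with rfl | rfl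
        · exact absurd hv hx
        · exact absurd hv hy
      · exact hu e' ⟨he', hve'⟩
    · refine ⟨s(x, y), ⟨Finset.mem_insert_self _ _, ?_⟩, ?_⟩
      · rcases hv with rfl | rfl <;> simp
      · rintro e' ⟨he', hve'⟩
        rcases Finset.mem_insert.1 he' with rfl | he'
        · rfl
        · exfalso
          have hvS := h3 e' he' v hve'
          rcases hv with rfl | rfl
          · exact hx hvS
          · exact hy hvS
  · intro e he v hv
    rcases Finset.mem_insert.1 he with rfl | he
    · rcases Sym2.mem_iff.1 hv with rfl | rfl
      · exact Or.inr (Or.inl rfl)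
      · exact Or.inr (Or.inr rfl)
    · exact Or.inl (h3 e he v hv)

lemma pm_erase {V : Type*} [DecidableEq V] {G : SimpleGraph V} {S : Set V}
    {M : Finset (Sym2 V)} {x y : V} (h : IsPMOn G S M) (hxy : s(x, y) ∈ M) :
    IsPMOn G (S \ {x, y}) (M.erase s(x, y)) := by
  obtain ⟨h1, h2, h3⟩ := h
  refine ⟨fun e he => h1 e (Finset.mem_of_mem_erase he), ?_, ?_⟩
  · intro v hv
    obtain ⟨hvS, hvxy⟩ := hv
    obtain ⟨e, ⟨heM, hve⟩, hu⟩ := h2 v hvS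
    have hne : e ≠ s(x, y) := by
      rintro rfl
      rcases Sym2.mem_iff.1 hve with rfl | rfl
      · exact hvxy (Or.inl rfl)
      · exact hvxy (Or.inr rfl)
    exact ⟨e, ⟨Finset.mem_erase.2 ⟨hne, heM⟩, hve⟩,
      fun e' he' => hu e' ⟨Finset.mem_of_mem_erase he'.1, he'.2⟩⟩
  · intro e he v hv
    have heM := Finset.mem_of_mem_erase he
    refine ⟨h3 e heM v hv, ?_⟩
    rintro (rfl | rfl)
    · have hxS : v ∈ S := h3 _ hxy v (by simp)
      obtain ⟨e₀, _, hu⟩ := h2 v hxS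
      have h1' : e = e₀ := hu e ⟨heM, hv⟩
      have h2' : s(v, y) = e₀ := hu s(v, y) ⟨hxy, by simp⟩
      rw [h1'.trans h2'.symm] at he
      exact Finset.notMem_erase _ _ he
    · have hyS : v ∈ S := h3 _ hxy v (by simp)
      obtain ⟨e₀, _, hu⟩ := h2 v hyS
      have h1' : e = e₀ := hu e ⟨heM, hv⟩
      have h2' : s(x, v) = e₀ := hu s(x, v) ⟨hxy, by simp⟩
      rw [h1'.trans h2'.symm] at he
      exact Finset.notMem_erase _ _ he

lemma col_ne {V : Type*} {col : V → Bool} {x y : V} (hx : col x = true)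
    (hy : col y = false) : x ≠ y := fun h => by rw [h, hy] at hx; exact Bool.noConfusion hx


lemma aux_sum_dimers {V : Type*} [Fintype V] [DecidableEq V] (G : SimpleGraph V)
    (col : V → Bool) (hcol : ∀ v w, G.Adj v w → col v ≠ col w)
    (b w₀ w : V) (hb : col b = true) (hw₀ : col w₀ = false) (hw : col w = false)
    (he : G.Adj b w) (M₂ : Finset (Sym2 V))
    (hM₂ : IsPMOn G (Set.univ \ {b, w₀}) M₂) :
    ∀ n (b₀ : V) (M₁ : Finset (Sym2 V)), col b₀ = true →
      IsPMOn G (Set.univ \ {b₀, w}) M₁ → (M₁ \ M₂).card ≤ n →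
      ∃ M M' : Finset (Sym2 V),
        IsPMOn G Set.univ M ∧ IsPMOn G (Set.univ \ {b₀, w₀}) M' ∧
        M₁.val + M₂.val + {s(b, w)} = M.val + M'.val := by
  have hbw₀ : b ≠ w₀ := col_ne hb hw₀
  intro n
  induction n using Nat.strong_induction_on with
  | _ n IH =>
  intro b₀ M₁ hb₀ hM₁ hcardn
  have hb₀w : b₀ ≠ w := col_ne hb₀ hw
  have hb₀w₀ : b₀ ≠ w₀ := col_ne hb₀ hw₀
  by_cases hbb : b₀ = b
  · subst hbb
    have heM₁ : s(b₀, w) ∉ M₁ := fun h =>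
      (hM₁.2.2 _ h b₀ (by simp)).2 (Or.inl rfl)
    refine ⟨insert s(b₀, w) M₁, M₂, ?_, hM₂, ?_⟩
    · exact pm_congr (pm_insert hM₁ he (by simp) (by simp)) (by ext v; simp; tauto)
    · rw [Finset.insert_val_of_notMem heM₁]
      ext a
      simp only [Multiset.count_add, Multiset.count_cons, Multiset.count_singleton]
      split_ifs <;> omega
  · -- b₀ is covered by M₂
    obtain ⟨f, ⟨hfM₂, hb₀f⟩, hfu⟩ := hM₂.2.1 b₀ ⟨trivial, by simp [hbb, hb₀w₀]⟩
    obtain ⟨w₁, rfl⟩ : ∃ c, f = s(b₀, c) :=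
      ⟨Sym2.Mem.other hb₀f, (Sym2.other_spec hb₀f).symm⟩
    have hadj₁ : G.Adj b₀ w₁ := (SimpleGraph.mem_edgeSet G).1 (hM₂.1 _ hfM₂)
    have hw₁ : col w₁ = false := by
      have h := hcol _ _ hadj₁
      rw [hb₀] at h
      simpa using (Ne.symm h)
    have hw₁w₀ : w₁ ≠ w₀ := by
      rintro rfl
      exact (hM₂.2.2 _ hfM₂ w₁ (by simp)).2 (Or.inr rfl)
    have hw₁b : w₁ ≠ b := Ne.symm (col_ne hb hw₁)
    have hw₁b₀ : w₁ ≠ b₀ := Ne.symm (col_ne hb₀ hw₁)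
    have hfe : s(b₀, w₁) ≠ s(b, w) := by
      intro h
      have hmem : b₀ ∈ s(b, w) := h ▸ (by simp : b₀ ∈ s(b₀, w₁))
      rcases Sym2.mem_iff.1 hmem with rfl | rfl
      · exact hbb rfl
      · exact hb₀w rfl
    have hfM₁ : s(b₀, w₁) ∉ M₁ := fun h =>
      (hM₁.2.2 _ h b₀ (by simp)).2 (Or.inl rfl)
    by_cases hww : w₁ = w
    · subst hww
      -- M = M₁ ∪ {f}, M' = (M₂ \ {f}) ∪ {e}
      have heM₂ : s(b, w₁) ∉ M₂.erase s(b₀, w₁) := fun h =>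
        (hM₂.2.2 _ (Finset.mem_of_mem_erase h) b (by simp)).2 (Or.inl rfl)
      refine ⟨insert s(b₀, w₁) M₁, insert s(b, w₁) (M₂.erase s(b₀, w₁)), ?_, ?_, ?_⟩
      · exact pm_congr (pm_insert hM₁ hadj₁ (by simp) (by simp)) (by ext v; simp; tauto)
      · refine pm_congr (pm_insert (pm_erase hM₂ hfM₂) he ?_ ?_) ?_
        · simp
        · simp [Ne.symm hw₁w₀]
        · ext v
          simp only [Set.mem_union, Set.mem_diff, Set.mem_univ, Set.mem_insert_iff,
            Set.mem_singleton_iff, true_and, not_or]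
          constructor
          · rintro (⟨⟨h1, h2⟩, h3, h4⟩ | rfl | rfl)
            · exact ⟨h3, h2⟩
            · exact ⟨Ne.symm hbb, hbw₀⟩
            · exact ⟨hw₁b₀, hw₁w₀⟩
          · rintro ⟨h1, h2⟩
            by_cases hv1 : v = b
            · exact Or.inr (Or.inl hv1)
            · by_cases hv2 : v = w₁
              · exact Or.inr (Or.inr hv2)
              · exact Or.inl ⟨⟨hv1, h2⟩, h1, hv2⟩
      · rw [Finset.insert_val_of_notMem hfM₁, Finset.insert_val_of_notMem heM₂,
          Finset.erase_val]
        have hfv : s(b₀, w₁) ∈ M₂.val := hfM₂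
        conv_lhs => rw [show M₂.val = s(b₀, w₁) ::ₘ M₂.val.erase s(b₀, w₁) from
          (Multiset.cons_erase hfv).symm]
        ext a
        simp only [Multiset.count_add, Multiset.count_cons, Multiset.count_singleton]
        split_ifs <;> omega
    · -- w₁ is covered by M₁
      obtain ⟨g, ⟨hgM₁, hw₁g⟩, hgu⟩ := hM₁.2.1 w₁ ⟨trivial, by simp [hw₁b₀, hww]⟩
      obtain ⟨b₁, rfl⟩ : ∃ c, g = s(w₁, c) :=
        ⟨Sym2.Mem.other hw₁g, (Sym2.other_spec hw₁g).symm⟩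
      have hadj₂ : G.Adj w₁ b₁ := (SimpleGraph.mem_edgeSet G).1 (hM₁.1 _ hgM₁)
      have hb₁ : col b₁ = true := by
        have h := hcol _ _ hadj₂
        rw [hw₁] at h
        simpa using (Ne.symm h)
      have hb₁b₀ : b₁ ≠ b₀ := by
        rintro rfl
        exact (hM₁.2.2 _ hgM₁ b₁ (by simp)).2 (Or.inl rfl)
      have hb₁w : b₁ ≠ w := col_ne hb₁ hw
      have hb₁w₀ : b₁ ≠ w₀ := col_ne hb₁ hw₀
      have hb₁w₁ : b₁ ≠ w₁ := col_ne hb₁ hw₁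
      have hgf : s(w₁, b₁) ≠ s(b₀, w₁) := by
        intro h
        have hmem : b₀ ∈ s(w₁, b₁) := h ▸ (by simp : b₀ ∈ s(b₀, w₁))
        rcases Sym2.mem_iff.1 hmem with rfl | rfl
        · exact hw₁b₀ rfl
        · exact hb₁b₀ rfl
      have hgM₂ : s(w₁, b₁) ∉ M₂ := by
        intro h
        have hw₁S : w₁ ∈ (Set.univ \ {b, w₀} : Set V) := by
          refine ⟨trivial, ?_⟩
          simp only [Set.mem_insert_iff, Set.mem_singleton_iff, not_or]
          exact ⟨hw₁b, hw₁w₀⟩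
        obtain ⟨e₀, _, hu⟩ := hM₂.2.1 w₁ hw₁S
        exact hgf ((hu _ ⟨h, by simp⟩).trans (hu _ ⟨hfM₂, by simp⟩).symm)
      -- the swapped matching M₁'
      set M₁' : Finset (Sym2 V) := insert s(b₀, w₁) (M₁.erase s(w₁, b₁)) with hM₁'def
      have hfM₁e : s(b₀, w₁) ∉ M₁.erase s(w₁, b₁) :=
        fun h => hfM₁ (Finset.mem_of_mem_erase h)
      have hM₁' : IsPMOn G (Set.univ \ {b₁, w}) M₁' := by
        refine pm_congr (pm_insert (pm_erase hM₁ hgM₁) hadj₁ ?_ ?_) ?_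
        · simp
        · simp [hw₁b₀]
        · ext v
          simp only [Set.mem_union, Set.mem_diff, Set.mem_univ, Set.mem_insert_iff,
            Set.mem_singleton_iff, true_and, not_or]
          constructor
          · rintro (⟨⟨h1, h2⟩, h3, h4⟩ | rfl | rfl)
            · exact ⟨h4, h2⟩
            · exact ⟨Ne.symm hb₁b₀, hb₀w⟩
            · exact ⟨Ne.symm hb₁w₁, hww⟩
          · rintro ⟨h1, h2⟩
            by_cases hv1 : v = b₀
            · exact Or.inr (Or.inl hv1)
            · by_cases hv2 : v = w₁
              · exact Or.inr (Or.inr hv2)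
              · exact Or.inl ⟨⟨hv1, h2⟩, hv2, h1⟩
      -- measure decreases
      have hmeas : (M₁' \ M₂).card < (M₁ \ M₂).card := by
        have h1 : M₁' \ M₂ = (M₁ \ M₂).erase s(w₁, b₁) := by
          ext a
          simp only [hM₁'def, Finset.mem_sdiff, Finset.mem_insert, Finset.mem_erase]
          constructor
          · rintro ⟨rfl | ⟨ha1, ha2⟩, ha3⟩
            · exact absurd hfM₂ ha3
            · exact ⟨ha1, ha2, ha3⟩
          · rintro ⟨ha1, ha2, ha3⟩
            exact ⟨Or.inr ⟨ha1, ha2⟩, ha3⟩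
        rw [h1]
        exact Finset.card_erase_lt_of_mem (Finset.mem_sdiff.2 ⟨hgM₁, hgM₂⟩)
      have hmlt : (M₁' \ M₂).card < n := lt_of_lt_of_le hmeas hcardn
      obtain ⟨M, M'', hM, hM'', heq⟩ := IH _ hmlt b₁ M₁' hb₁ hM₁' le_rfl
      -- f has multiplicity 2 on the left, hence f ∈ M''
      have hfM₁'v : s(b₀, w₁) ∈ M₁'.val := Finset.mem_insert_self _ _
      have hfM'' : s(b₀, w₁) ∈ M'' := by
        have hcnt := congrArg (Multiset.count s(b₀, w₁)) heq
        rw [Multiset.count_add, Multiset.count_add, Multiset.count_add] at hcnt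
        have c1 : 1 ≤ Multiset.count s(b₀, w₁) M₁'.val :=
          Multiset.one_le_count_iff_mem.2 hfM₁'v
        have c2 : 1 ≤ Multiset.count s(b₀, w₁) M₂.val :=
          Multiset.one_le_count_iff_mem.2 hfM₂
        have c3 : Multiset.count s(b₀, w₁) ({s(b, w)} : Multiset (Sym2 V)) = 0 := by
          simp [Multiset.count_singleton, hfe]
        have c4 : Multiset.count s(b₀, w₁) M.val ≤ 1 :=
          Multiset.nodup_iff_count_le_one.1 M.nodup _
        have c5 : 1 ≤ Multiset.count s(b₀, w₁) M''.val := by omega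
        exact Multiset.one_le_count_iff_mem.1 c5
      -- M' = (M'' \ {f}) ∪ {g}
      have hgM''e : s(w₁, b₁) ∉ M''.erase s(b₀, w₁) := by
        intro h
        have hgM'' := Finset.mem_of_mem_erase h
        have hw₁S : w₁ ∈ (Set.univ \ {b₁, w₀} : Set V) := by
          refine ⟨trivial, ?_⟩
          simp only [Set.mem_insert_iff, Set.mem_singleton_iff, not_or]
          exact ⟨Ne.symm hb₁w₁, hw₁w₀⟩
        obtain ⟨e₀, _, hu⟩ := hM''.2.1 w₁ hw₁S
        exact hgf ((hu _ ⟨hgM'', by simp⟩).trans (hu _ ⟨hfM'', by simp⟩).symm)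
      refine ⟨M, insert s(w₁, b₁) (M''.erase s(b₀, w₁)), hM, ?_, ?_⟩
      · refine pm_congr (pm_insert (pm_erase hM'' hfM'') hadj₂ ?_ ?_) ?_
        · simp [hw₁b₀]
        · simp
        · ext v
          simp only [Set.mem_union, Set.mem_diff, Set.mem_univ, Set.mem_insert_iff,
            Set.mem_singleton_iff, true_and, not_or]
          constructor
          · rintro (⟨⟨h1, h2⟩, h3, h4⟩ | rfl | rfl)
            · exact ⟨h3, h2⟩
            · exact ⟨hw₁b₀, hw₁w₀⟩
            · exact ⟨hb₁b₀, hb₁w₀⟩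
          · rintro ⟨h1, h2⟩
            by_cases hv1 : v = b₁
            · exact Or.inr (Or.inr hv1)
            · by_cases hv2 : v = w₁
              · exact Or.inr (Or.inl hv2)
              · exact Or.inl ⟨⟨hv1, h2⟩, h1, hv2⟩
      · -- multiset identity
        have e1 : M₁'.val = s(b₀, w₁) ::ₘ M₁.val.erase s(w₁, b₁) := by
          rw [hM₁'def, Finset.insert_val_of_notMem hfM₁e, Finset.erase_val]
        have e2 : M₁.val = s(w₁, b₁) ::ₘ M₁.val.erase s(w₁, b₁) :=
          (Multiset.cons_erase (show s(w₁, b₁) ∈ M₁.val from hgM₁)).symm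
        have e3 : M''.val = s(b₀, w₁) ::ₘ M''.val.erase s(b₀, w₁) :=
          (Multiset.cons_erase (show s(b₀, w₁) ∈ M''.val from hfM'')).symm
        have e4 : (insert s(w₁, b₁) (M''.erase s(b₀, w₁))).val
            = s(w₁, b₁) ::ₘ M''.val.erase s(b₀, w₁) := by
          rw [Finset.insert_val_of_notMem hgM''e, Finset.erase_val]
        rw [e1, e3] at heq
        rw [e2, e4]
        ext a
        have hcnt := congrArg (Multiset.count a) heq
        simp only [Multiset.count_add, Multiset.count_cons, Multiset.count_singleton] at hcnt ⊢
        split_ifs at hcnt ⊢ <;> omega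

/-- Lemma 5.5 ("sum of dimers"): in a finite bipartite graph with equal color classes, if
`M₁` is a perfect matching of `G \ {b₀, w}`, `M₂` a perfect matching of `G \ {b, w₀}`, and
`e = bw` an edge, then there exist a perfect matching `M` of `G` and a perfect matching `M'`
of `G \ {b₀, w₀}` with `M₁ ∪ M₂ ∪ {e} = M ∪ M'` as multisets of edges. -/
theorem stmt_8 {V : Type*} [Fintype V] [DecidableEq V] (G : SimpleGraph V)
    (col : V → Bool) (hcol : ∀ v w, G.Adj v w → col v ≠ col w)
    (hcard : (Finset.univ.filter fun v => col v = true).card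
           = (Finset.univ.filter fun v => col v = false).card)
    (b₀ b w₀ w : V) (hb₀ : col b₀ = true) (hb : col b = true)
    (hw₀ : col w₀ = false) (hw : col w = false)
    (he : G.Adj b w)
    (M₁ M₂ : Finset (Sym2 V))
    (hM₁ : IsPMOn G (Set.univ \ {b₀, w}) M₁)
    (hM₂ : IsPMOn G (Set.univ \ {b, w₀}) M₂) :
    ∃ M M' : Finset (Sym2 V),
      IsPMOn G Set.univ M ∧ IsPMOn G (Set.univ \ {b₀, w₀}) M' ∧
      M₁.val + M₂.val + {s(b, w)} = M.val + M'.val := by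
  exact aux_sum_dimers G col hcol b w₀ w hb hw₀ hw he M₂ hM₂
    (M₁ \ M₂).card b₀ M₁ hb₀ hM₁ le_rfl
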